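/- Suppose the family {F_θ} satisfies the MLR assumption (Assumption 2), the signed false-null statistics are positively regression dependent (Assumption 3), Assumption 5 holds, and the multivariate monotone likelihood ratio condition (Assumption 7, MMLR) holds. Then Procedure 2 (the directional fixed sequence procedure with constant critical value α at every step) satisfies mdFWER ≤ α for every n and every configuration of parameters θ_1,…,θ_n ∈ ℝ. -/

import Mathlib

/-!
Write `S_i = sign θ_i · T_i`, `κ = (α/2)/(1 - α/2)`, and let `G_k` be the event that every
hypothesis before `k` is rejected with the correct sign, i.e. `S_j ≥ c₂` for `j < k`. The first
false claim is made either at a false null `i` before the first true null `i₀`, on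
`G_i ∩ {S_i ≤ c₁}`, or at `i₀` itself, on `G_{i₀} ∩ {T_{i₀} rejects}`.

Before `i₀`, MLR gives the marginal odds bound `P(S_i < c₁) ≤ κ P(S_i < c₂)`, and positive
regression dependence transfers it to `P(G_i ∩ {S_i < c₁}) ≤ κ P(G_i ∩ {S_i < c₂})`. Since
`G_i ∩ {S_i < c₂} = G_i \ G_{i+1}`, these errors telescope to at most `κ (1 - P(G_{i₀}))`.
At `i₀`, either some earlier parameter is negative, and MMLR gives
`P(G_{i₀}) ≤ P(T_l ≤ c₁) ≤ P(T_{i₀} ≤ c₁) = α/2`; or all are positive, and Assumption 5 (with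
trivial conditioning) gives the same odds bound for the lower tail of `T_{i₀}` on `G_{i₀}`. Either
way the error at `i₀` has probability at most `κ P(G_{i₀}) + (1 - κ) α/2`, so the total is at
most `κ + (1 - κ) α/2 = α`.
-/

open MeasureTheory ProbabilityTheory Set Filter Topology
open scoped ENNReal

section LikelihoodRatio

variable {α : Type*} [MeasurableSpace α] {μ : Measure α}

theorem setLIntegral_mul_setLIntegral_le_of_cross {u v : α → ℝ≥0∞} (hu : Measurable u)
    (hv : Measurable v) {L H : Set α} (h : ∀ x ∈ L, ∀ y ∈ H, u x * v y ≤ v x * u y) :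
    (∫⁻ x in L, u x ∂μ) * ∫⁻ y in H, v y ∂μ ≤ (∫⁻ x in L, v x ∂μ) * ∫⁻ y in H, u y ∂μ := by
  rw [← lintegral_mul_const _ hu, ← lintegral_mul_const _ hv]
  refine setLIntegral_mono (hv.mul_const _) fun x hx => ?_
  rw [← lintegral_const_mul _ hv, ← lintegral_const_mul _ hu]
  exact setLIntegral_mono (hu.const_mul _) (h x hx)

theorem measureReal_mul_le_of_cross {ρ σ : Measure α} [IsFiniteMeasure ρ] [IsFiniteMeasure σ]
    {u v : α → ℝ} (hu0 : 0 ≤ u) (hv0 : 0 ≤ v) (hu : Measurable u) (hv : Measurable v)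
    (hρ : ρ = μ.withDensity fun x => ENNReal.ofReal (u x))
    (hσ : σ = μ.withDensity fun x => ENNReal.ofReal (v x))
    {L H : Set α} (hL : MeasurableSet L) (hH : MeasurableSet H)
    (h : ∀ x ∈ L, ∀ y ∈ H, u x * v y ≤ v x * u y) :
    ρ.real L * σ.real H ≤ σ.real L * ρ.real H := by
  simp only [measureReal_def, ← ENNReal.toReal_mul]
  refine ENNReal.toReal_mono (ENNReal.mul_ne_top (measure_ne_top _ _) (measure_ne_top _ _)) ?_
  subst hρ hσ
  rw [withDensity_apply _ hL, withDensity_apply _ hL, withDensity_apply _ hH,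
    withDensity_apply _ hH]
  refine setLIntegral_mul_setLIntegral_le_of_cross hu.ennreal_ofReal hv.ennreal_ofReal
    fun x hx y hy => ?_
  rw [← ENNReal.ofReal_mul (hu0 x), ← ENNReal.ofReal_mul (hv0 x)]
  exact ENNReal.ofReal_le_ofReal (h x hx y hy)

end LikelihoodRatio

theorem measureReal_Iic_le_of_likelihoodRatio {μ ρ σ : Measure ℝ}
    [IsProbabilityMeasure ρ] [IsProbabilityMeasure σ] {u v : ℝ → ℝ} (hu0 : 0 ≤ u) (hv0 : 0 ≤ v)
    (hu : Measurable u) (hv : Measurable v)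
    (hρ : ρ = μ.withDensity fun x => ENNReal.ofReal (u x))
    (hσ : σ = μ.withDensity fun x => ENNReal.ofReal (v x))
    (hlr : ∀ x y, x < y → u x * v y ≤ u y * v x) (c : ℝ) :
    ρ.real (Iic c) ≤ σ.real (Iic c) := by
  have hcross := measureReal_mul_le_of_cross hu0 hv0 hu hv hρ hσ (measurableSet_Iic (a := c))
    measurableSet_Ioi fun x hx y hy => (hlr x y (lt_of_le_of_lt hx hy)).trans_eq (mul_comm _ _)
  rw [← compl_Iic, measureReal_compl measurableSet_Iic, measureReal_compl measurableSet_Iic,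
    probReal_univ, probReal_univ] at hcross
  nlinarith

section LikelihoodRatioTails

variable {ν₀ ρ : Measure ℝ} [IsFiniteMeasure ν₀] [IsProbabilityMeasure ρ] {f₀ g : ℝ → ℝ}
  {p c₁ c₂ : ℝ}

theorem measureReal_Iic_mul_le_of_likelihoodRatio (hf₀ : 0 ≤ f₀) (hg : 0 ≤ g)
    (hf₀m : Measurable f₀) (hgm : Measurable g)
    (hν₀ : ν₀ = volume.withDensity fun x => ENNReal.ofReal (f₀ x))
    (hρ : ρ = volume.withDensity fun x => ENNReal.ofReal (g x))
    (hlr : ∀ x y, x < y → g x * f₀ y ≤ g y * f₀ x) (hc : c₁ ≤ c₂)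
    (h₁ : ν₀.real (Iic c₁) = p) (h₂ : ν₀.real (Iic c₂) = 1 - p) :
    ρ.real (Iic c₁) * (1 - p) ≤ p * ρ.real (Iic c₂) := by
  have hcross := measureReal_mul_le_of_cross hg hf₀ hgm hf₀m hρ hν₀ (measurableSet_Iic (a := c₁))
    (measurableSet_Ioc (a := c₁) (b := c₂)) fun x hx y hy => by
      have := hlr x y (lt_of_le_of_lt hx hy.1)
      linarith
  rw [← Iic_sdiff_Iic, measureReal_sdiff (Iic_subset_Iic.2 hc) measurableSet_Iic,
    measureReal_sdiff (Iic_subset_Iic.2 hc) measurableSet_Iic, h₁, h₂] at hcross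
  nlinarith

theorem measureReal_Ioi_mul_le_of_likelihoodRatio (hf₀ : 0 ≤ f₀) (hg : 0 ≤ g)
    (hf₀m : Measurable f₀) (hgm : Measurable g)
    (hν₀ : ν₀ = volume.withDensity fun x => ENNReal.ofReal (f₀ x))
    (hρ : ρ = volume.withDensity fun x => ENNReal.ofReal (g x))
    (hlr : ∀ x y, x < y → f₀ x * g y ≤ f₀ y * g x) (hc : c₁ ≤ c₂)
    (h₁ : ν₀.real (Iic c₁) = p) (h₂ : ν₀.real (Iic c₂) = 1 - p) (huniv : ν₀.real univ ≤ 1) :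
    ρ.real (Ioi c₂) * (1 - p) ≤ p * ρ.real (Ioi c₁) := by
  have hcross := measureReal_mul_le_of_cross hf₀ hg hf₀m hgm hν₀ hρ
    (measurableSet_Ioc (a := c₁) (b := c₂)) (measurableSet_Ioi (a := c₂)) fun x hx y hy => by
      have := hlr x y (lt_of_le_of_lt hx.2 hy)
      linarith
  have hν₀H : ν₀.real (Ioi c₂) ≤ p := by
    rw [← compl_Iic, measureReal_compl measurableSet_Iic, h₂]
    linarith
  have hρL : ρ.real (Ioc c₁ c₂) = ρ.real (Ioi c₁) - ρ.real (Ioi c₂) := by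
    rw [← Ioi_sdiff_Ioi, measureReal_sdiff (Ioi_subset_Ioi hc) measurableSet_Ioi]
  have hν₀L : ν₀.real (Ioc c₁ c₂) = 1 - p - p := by
    rw [← Iic_sdiff_Iic, measureReal_sdiff (Iic_subset_Iic.2 hc) measurableSet_Iic, h₁, h₂]
  rw [hν₀L, hρL] at hcross
  nlinarith [mul_le_mul_of_nonneg_left hν₀H (measureReal_nonneg (μ := ρ) (s := Ioc c₁ c₂))]

end LikelihoodRatioTails

section DensityOnReal

variable {g : ℝ → ℝ}

theorem setLIntegral_Iic_ofReal_of_integral_ne_zero (hg0 : 0 ≤ g) {x y : ℝ} (hxy : x ≤ y)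
    (hy : ∫ t in Iic y, g t ≠ 0) :
    ∫⁻ t in Iic x, ENNReal.ofReal (g t) = ENNReal.ofReal (∫ t in Iic x, g t) :=
  (ofReal_integral_eq_lintegral_ofReal (IntegrableOn.mono_set (Integrable.of_integral_ne_zero hy)
    (Iic_subset_Iic.2 hxy)) (ae_of_all _ fun t => hg0 t)).symm

theorem withDensity_ofReal_univ_le_one (hg0 : 0 ≤ g) (hle : ∀ x, ∫ t in Iic x, g t ≤ 1)
    (hpos : ∀ᶠ x in atTop, ∫ t in Iic x, g t ≠ 0) :
    volume.withDensity (fun t => ENNReal.ofReal (g t)) univ ≤ 1 :=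
  le_of_tendsto (tendsto_measure_Iic_atTop _) <| hpos.mono fun x hx => by
    rw [withDensity_apply _ measurableSet_Iic,
      setLIntegral_Iic_ofReal_of_integral_ne_zero hg0 le_rfl hx]
    exact ENNReal.ofReal_le_one.2 (hle x)

theorem map_eq_withDensity_of_cdf {Ω : Type*} [MeasurableSpace Ω] {P : Measure Ω}
    [IsProbabilityMeasure P] {X : Ω → ℝ} (hX : Measurable X) (hg0 : 0 ≤ g)
    (hcdf : ∀ x, (P {ω | X ω ≤ x}).toReal = ∫ t in Iic x, g t) :
    P.map X = volume.withDensity fun t => ENNReal.ofReal (g t) := by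
  have : IsProbabilityMeasure (P.map X) := Measure.isProbabilityMeasure_map hX.aemeasurable
  refine Measure.ext_of_Iic _ _ fun x => ?_
  have hpos : ∀ᶠ y in atTop, 0 < P.map X (Iic y) :=
    (tendsto_measure_Iic_atTop _).eventually_const_lt (by simp)
  obtain ⟨y, hxy, hy⟩ := ((eventually_ge_atTop x).and hpos).exists
  rw [Measure.map_apply hX measurableSet_Iic] at hy ⊢
  rw [withDensity_apply _ measurableSet_Iic, setLIntegral_Iic_ofReal_of_integral_ne_zero hg0 hxy,
    ← hcdf x, ENNReal.ofReal_toReal (measure_ne_top _ _)]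
  · rfl
  · rw [← hcdf y]
    exact (ENNReal.toReal_pos hy.ne' (measure_ne_top _ _)).ne'

theorem withDensity_ofReal_real_Iic (hg0 : 0 ≤ g) {x : ℝ} (hx : ∫ t in Iic x, g t ≠ 0) :
    (volume.withDensity fun t => ENNReal.ofReal (g t)).real (Iic x) = ∫ t in Iic x, g t := by
  rw [measureReal_def, withDensity_apply _ measurableSet_Iic,
    setLIntegral_Iic_ofReal_of_integral_ne_zero hg0 le_rfl hx,
    ENNReal.toReal_ofReal (setIntegral_nonneg measurableSet_Iic fun t _ => hg0 t)]

end DensityOnReal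

section Atoms

variable {Ω : Type*} [MeasurableSpace Ω] {P : Measure Ω} {X : Ω → ℝ}

theorem measure_eq_zero_of_map_eq_withDensity (hX : Measurable X) {g : ℝ → ℝ≥0∞}
    (h : P.map X = volume.withDensity g) (x : ℝ) : P {ω | X ω = x} = 0 := by
  have : NullSingletonClass (P.map X) := h ▸ inferInstance
  rw [← measure_singleton (μ := P.map X) x, Measure.map_apply hX (measurableSet_singleton x)]
  rfl

theorem measure_mul_eq_zero (h : ∀ x, P {ω | X ω = x} = 0) {a : ℝ} (ha : a ≠ 0) (c : ℝ) :
    P {ω | a * X ω = c} = 0 := by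
  convert h (c / a) using 2
  ext ω
  change a * X ω = c ↔ X ω = c / a
  rw [eq_div_iff ha, mul_comm]

variable [IsFiniteMeasure P]

theorem measureReal_inter_le_le_of_null {c : ℝ} (h : P {ω | X ω = c} = 0) (G : Set Ω) :
    P.real (G ∩ {ω | X ω ≤ c}) ≤ P.real ({ω | X ω < c} ∩ G) :=
  calc P.real (G ∩ {ω | X ω ≤ c}) ≤ P.real (({ω | X ω < c} ∩ G) ∪ {ω | X ω = c}) :=
        measureReal_mono fun ω ⟨hG, (hle : X ω ≤ c)⟩ => hle.lt_or_eq.imp (fun hlt => ⟨hlt, hG⟩) id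
    _ ≤ P.real ({ω | X ω < c} ∩ G) + P.real {ω | X ω = c} := measureReal_union_le _ _
    _ = P.real ({ω | X ω < c} ∩ G) := by rw [measureReal_def _ {ω | X ω = c}, h]; simp

theorem measureReal_inter_le_or_le_le {c₁ c₂ : ℝ} (h : P {ω | X ω = c₁} = 0) (G : Set Ω) :
    P.real (G ∩ {ω | X ω ≤ c₁ ∨ c₂ ≤ X ω}) ≤
      P.real ({ω | X ω < c₁} ∩ G) + P.real (G ∩ {ω | c₂ ≤ X ω}) :=
  calc P.real (G ∩ {ω | X ω ≤ c₁ ∨ c₂ ≤ X ω})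
      = P.real (G ∩ {ω | X ω ≤ c₁} ∪ G ∩ {ω | c₂ ≤ X ω}) := by
        rw [← inter_union_distrib_left]; rfl
    _ ≤ P.real (G ∩ {ω | X ω ≤ c₁}) + P.real (G ∩ {ω | c₂ ≤ X ω}) := measureReal_union_le _ _
    _ ≤ P.real ({ω | X ω < c₁} ∩ G) + P.real (G ∩ {ω | c₂ ≤ X ω}) := by
        linarith [measureReal_inter_le_le_of_null h G]

theorem measureReal_lt_eq_measureReal_le {c : ℝ} (h : P {ω | X ω = c} = 0) :
    P.real {ω | X ω < c} = P.real {ω | X ω ≤ c} :=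
  le_antisymm (measureReal_mono fun _ (h : X _ < c) => h.le)
    (by simpa using measureReal_inter_le_le_of_null h univ)

end Atoms

section ConditionalDensity

variable {Ω γ : Type*} [MeasurableSpace Ω] [MeasurableSpace γ] {P : Measure Ω} {Y : Ω → γ}

def IsCondDensity (P : Measure Ω) (Y : Ω → γ) (X : Ω → ℝ) (p : γ → ℝ → ℝ) : Prop :=
  ∀ A, MeasurableSet A → ∀ B, MeasurableSet B →
    (P {ω | Y ω ∈ A ∧ X ω ∈ B}).toReal = ∫ t in A, (∫ x in B, p t x) ∂(P.map Y)

/-- Assumption 7 (MMLR) for one pair: conditional densities of `X` and `Z` given `Y` whose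
likelihood ratio `q / p` is a.s. nonincreasing. -/
def HasMLRCondDensities (P : Measure Ω) (Y : Ω → γ) (X Z : Ω → ℝ) : Prop :=
  ∃ p q : γ → ℝ → ℝ, Measurable (Function.uncurry p) ∧ Measurable (Function.uncurry q) ∧
    (∀ t x, 0 ≤ p t x) ∧ (∀ t x, 0 ≤ q t x) ∧ IsCondDensity P Y X p ∧ IsCondDensity P Y Z q ∧
    ∀ᵐ t ∂(P.map Y), ∀ x₁ x₂ : ℝ, x₁ < x₂ → p t x₁ * q t x₂ ≤ p t x₂ * q t x₁

namespace IsCondDensity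

variable {X : Ω → ℝ} {p : γ → ℝ → ℝ}

theorem ae_isProbabilityMeasure [IsProbabilityMeasure P] (h : IsCondDensity P Y X p)
    (hY : Measurable Y) (hp : Measurable (Function.uncurry p)) (hp0 : ∀ t x, 0 ≤ p t x) :
    ∀ᵐ t ∂(P.map Y),
      IsProbabilityMeasure (volume.withDensity fun x => ENNReal.ofReal (p t x)) := by
  have : IsProbabilityMeasure (P.map Y) := Measure.isProbabilityMeasure_map hY.aemeasurable
  set m : γ → ℝ := fun t => ∫ x, p t x
  have hm : Measurable m := (hp.stronglyMeasurable.integral_prod_right (ν := volume)).measurable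
  have hset : ∀ A, MeasurableSet A → ∫ t in A, m t ∂(P.map Y) = (P.map Y).real A := by
    intro A hA
    have := h A hA univ MeasurableSet.univ
    simp only [mem_univ, and_true, Measure.restrict_univ] at this
    rw [← this, measureReal_def, Measure.map_apply hY hA]
    rfl
  have hmi : Integrable m (P.map Y) :=
    Integrable.of_integral_ne_zero (by rw [← setIntegral_univ, hset _ MeasurableSet.univ]; simp)
  have hm1 : m =ᵐ[P.map Y] fun _ => 1 :=
    hmi.ae_eq_of_forall_setIntegral_eq _ _ (integrable_const 1) fun A hA _ => by simp [hset A hA]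
  filter_upwards [hm1] with t (ht : ∫ x, p t x = 1)
  refine ⟨?_⟩
  rw [withDensity_apply _ MeasurableSet.univ, Measure.restrict_univ,
    ← ofReal_integral_eq_lintegral_ofReal (.of_integral_ne_zero (ht ▸ one_ne_zero))
      (ae_of_all _ (hp0 t)), ht, ENNReal.ofReal_one]

theorem toReal_measure_le_eq_integral (h : IsCondDensity P Y X p)
    (hp : Measurable (Function.uncurry p)) (hp0 : ∀ t x, 0 ≤ p t x) (c : ℝ) :
    (P {ω | X ω ≤ c}).toReal =
      ∫ t, (volume.withDensity fun x => ENNReal.ofReal (p t x)).real (Iic c) ∂(P.map Y) := by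
  have := h univ MeasurableSet.univ (Iic c) measurableSet_Iic
  simp only [mem_univ, true_and, mem_Iic, Measure.restrict_univ] at this
  rw [this]
  refine integral_congr_ae (ae_of_all _ fun t => ?_)
  dsimp only
  rw [measureReal_def, withDensity_apply _ measurableSet_Iic,
    integral_eq_lintegral_of_nonneg_ae (ae_of_all _ (hp0 t))
      (hp.comp measurable_prodMk_left).aestronglyMeasurable]

end IsCondDensity

theorem HasMLRCondDensities.measure_le_le [IsProbabilityMeasure P] {X Z : Ω → ℝ}
    (h : HasMLRCondDensities P Y X Z) (hY : Measurable Y) (c : ℝ) :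
    P {ω | X ω ≤ c} ≤ P {ω | Z ω ≤ c} := by
  obtain ⟨p, q, hp, hq, hp0, hq0, hpX, hqZ, hlr⟩ := h
  have hmeas :
      Measurable fun t => (volume.withDensity fun x => ENNReal.ofReal (q t x)).real (Iic c) := by
    simp_rw [measureReal_def, withDensity_apply _ measurableSet_Iic]
    exact (hq.ennreal_ofReal.lintegral_prod_right' (ν := volume.restrict (Iic c))).ennreal_toReal
  have hpt := hpX.ae_isProbabilityMeasure hY hp hp0
  have hqt := hqZ.ae_isProbabilityMeasure hY hq hq0
  rw [← ENNReal.toReal_le_toReal (measure_ne_top _ _) (measure_ne_top _ _),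
    hpX.toReal_measure_le_eq_integral hp hp0, hqZ.toReal_measure_le_eq_integral hq hq0]
  refine integral_mono_of_nonneg (ae_of_all _ fun t => measureReal_nonneg) ?_ ?_
  · refine Integrable.of_bound hmeas.aestronglyMeasurable 1 ?_
    filter_upwards [hqt] with t ht
    rw [Real.norm_of_nonneg measureReal_nonneg]
    exact measureReal_le_one
  · filter_upwards [hpt, hqt, hlr] with t hpt hqt hlrt
    exact measureReal_Iic_le_of_likelihoodRatio (hp0 t) (hq0 t) (hp.comp measurable_prodMk_left)
      (hq.comp measurable_prodMk_left) rfl rfl hlrt c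

end ConditionalDensity

section Telescoping

variable {Ω : Type*} [MeasurableSpace Ω] {μ : Measure Ω}

theorem measureReal_biUnion_range_le_of_telescoping {G E : ℕ → Set Ω} {κ : ℝ} {K : ℕ}
    (hstep : ∀ k < K, μ.real (G k ∩ E k) ≤ κ * (μ.real (G k) - μ.real (G (k + 1)))) :
    μ.real (⋃ k ∈ Finset.range K, G k ∩ E k) ≤ κ * (μ.real (G 0) - μ.real (G K)) :=
  calc μ.real (⋃ k ∈ Finset.range K, G k ∩ E k)
      ≤ ∑ k ∈ Finset.range K, μ.real (G k ∩ E k) := measureReal_biUnion_finset_le _ _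
    _ ≤ ∑ k ∈ Finset.range K, κ * (μ.real (G k) - μ.real (G (k + 1))) :=
      Finset.sum_le_sum fun k hk => hstep k (Finset.mem_range.1 hk)
    _ = κ * (μ.real (G 0) - μ.real (G K)) := by rw [← Finset.mul_sum, Finset.sum_range_sub']

theorem measureReal_inter_le_of_cross [IsFiniteMeasure μ] {A B E : Set Ω} {κ : ℝ} (hκ : 0 ≤ κ)
    (hcross : μ.real (A ∩ E) * μ.real B ≤ μ.real (B ∩ E) * μ.real A)
    (hAB : μ.real A ≤ κ * μ.real B) : μ.real (A ∩ E) ≤ κ * μ.real (B ∩ E) := by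
  have hAE : μ.real (A ∩ E) ≤ μ.real A := measureReal_mono inter_subset_left
  rcases (measureReal_nonneg (μ := μ) (s := B)).eq_or_lt with hB | hB
  · rw [← hB, mul_zero] at hAB
    exact hAE.trans (hAB.trans (mul_nonneg hκ measureReal_nonneg))
  · refine le_of_mul_le_mul_right ?_ hB
    calc μ.real (A ∩ E) * μ.real B ≤ μ.real (B ∩ E) * μ.real A := hcross
      _ ≤ μ.real (B ∩ E) * (κ * μ.real B) := mul_le_mul_of_nonneg_left hAB measureReal_nonneg
      _ = κ * μ.real (B ∩ E) * μ.real B := by ring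

end Telescoping

section PositiveRegressionDependence

variable {Ω ι β : Type*} [MeasurableSpace Ω] {P : Measure Ω}

theorem IsUpperSet.monotone_indicator_one [Preorder β] {U : Set β} (hU : IsUpperSet U) :
    Monotone (U.indicator (1 : β → ℝ)) := by
  intro x y hxy
  by_cases hx : x ∈ U
  · simp [hx, hU hxy hx]
  · simp [hx, indicator_nonneg]

theorem setIntegral_indicator_one_comp [MeasurableSpace β] {Y : Ω → β} (hY : Measurable Y)
    {U : Set β} (hU : MeasurableSet U) (A : Set Ω) :
    ∫ ω in A, U.indicator 1 (Y ω) ∂P = P.real (A ∩ Y ⁻¹' U) := by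
  have : (fun ω => U.indicator (1 : β → ℝ) (Y ω)) = (Y ⁻¹' U).indicator 1 := rfl
  rw [this, setIntegral_indicator (hY hU)]
  simp

/-- The lower-tail half of Assumption 3 (positive regression dependence). -/
def LowerTailPRD (P : Measure Ω) (S : ι → Ω → ℝ) : Prop :=
  ∀ k φ, Measurable φ → Monotone φ → (∃ C, ∀ x, |φ x| ≤ C) → ∀ u u' : ℝ, u ≤ u' →
    P {ω | S k ω < u} ≠ 0 → P {ω | S k ω < u'} ≠ 0 →
      (∫ ω in {ω | S k ω < u}, φ (fun i => S i ω) ∂P) / (P {ω | S k ω < u}).toReal ≤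
        (∫ ω in {ω | S k ω < u'}, φ (fun i => S i ω) ∂P) / (P {ω | S k ω < u'}).toReal

theorem LowerTailPRD.measureReal_cross [IsProbabilityMeasure P] {S : ι → Ω → ℝ}
    (h : LowerTailPRD P S) (hS : ∀ i, Measurable (S i)) (k : ι) {U : Set (ι → ℝ)}
    (hU : IsUpperSet U) (hUm : MeasurableSet U) {u u' : ℝ} (hu : u ≤ u') :
    P.real ({ω | S k ω < u} ∩ {ω | (fun i => S i ω) ∈ U}) * P.real {ω | S k ω < u'} ≤
      P.real ({ω | S k ω < u'} ∩ {ω | (fun i => S i ω) ∈ U}) * P.real {ω | S k ω < u} := by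
  have hY : Measurable fun ω i => S i ω := measurable_pi_lambda _ hS
  by_cases h₁ : P {ω | S k ω < u} = 0
  · simp [measureReal_def, measure_mono_null inter_subset_left h₁, h₁]
  by_cases h₂ : P {ω | S k ω < u'} = 0
  · simp only [measureReal_def, h₂, ENNReal.toReal_zero, mul_zero]
    positivity
  have hφ := h k (U.indicator 1) (measurable_one.indicator hUm) hU.monotone_indicator_one
    ⟨1, fun x => by by_cases hx : x ∈ U <;> simp [hx]⟩ u u' hu h₁ h₂
  rw [setIntegral_indicator_one_comp hY hUm, setIntegral_indicator_one_comp hY hUm,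
    div_le_div_iff₀ (ENNReal.toReal_pos h₁ (measure_ne_top _ _))
      (ENNReal.toReal_pos h₂ (measure_ne_top _ _))] at hφ
  exact hφ

/-- The lower-tail half of Assumption 5, conditionally on the σ-algebra `m`. -/
def CondLowerTailPRD [MeasurableSpace β] [Preorder β] (P : Measure Ω) (m : MeasurableSpace Ω)
    (Y : Ω → β) (X : Ω → ℝ) : Prop :=
  ∀ φ : β → ℝ, Measurable φ → Monotone φ → (∀ x, 0 ≤ φ x) → (∃ C, ∀ x, φ x ≤ C) →
    ∀ u u' : ℝ, u ≤ u' → ∀ᵐ ω ∂P,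
      P[fun ω' => φ (Y ω') * (if X ω' < u then 1 else 0) | m] ω *
          P[fun ω' => (if X ω' < u' then (1 : ℝ) else 0) | m] ω ≤
        P[fun ω' => φ (Y ω') * (if X ω' < u' then 1 else 0) | m] ω *
          P[fun ω' => (if X ω' < u then (1 : ℝ) else 0) | m] ω

theorem MeasurableSpace.comap_eq_bot_of_subsingleton {α : Type*} [Subsingleton β]
    (m : MeasurableSpace β) (g : α → β) : m.comap g = ⊥ := by
  refine le_antisymm ?_ bot_le
  rintro s ⟨t, -, rfl⟩
  exact MeasurableSpace.measurableSet_bot_iff.2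
    (Subsingleton.set_cases (p := fun t => g ⁻¹' t = ∅ ∨ g ⁻¹' t = univ) (Or.inl rfl)
      (Or.inr rfl) t)

theorem CondLowerTailPRD.measureReal_cross [IsProbabilityMeasure P] [MeasurableSpace β]
    [Preorder β] {Y : Ω → β} {X : Ω → ℝ} (h : CondLowerTailPRD P ⊥ Y X) (hY : Measurable Y)
    (hX : Measurable X) {U : Set β} (hU : IsUpperSet U) (hUm : MeasurableSet U) {u u' : ℝ}
    (hu : u ≤ u') :
    P.real ({ω | X ω < u} ∩ Y ⁻¹' U) * P.real {ω | X ω < u'} ≤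
      P.real ({ω | X ω < u'} ∩ Y ⁻¹' U) * P.real {ω | X ω < u} := by
  have hφ := h (U.indicator 1) (measurable_one.indicator hUm) hU.monotone_indicator_one
    (fun x => by by_cases hx : x ∈ U <;> simp [hx])
    ⟨1, fun x => by by_cases hx : x ∈ U <;> simp [hx]⟩ u u' hu
  simp only [condExp_bot] at hφ
  obtain ⟨-, hφ⟩ := hφ.exists
  have key : ∀ v, ∫ ω, U.indicator 1 (Y ω) * (if X ω < v then (1 : ℝ) else 0) ∂P =
      P.real ({ω | X ω < v} ∩ Y ⁻¹' U) := by
    intro v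
    rw [← setIntegral_indicator_one_comp hY hUm,
      ← integral_indicator (measurableSet_lt hX measurable_const)]
    congr 1; ext ω
    by_cases hv : X ω < v <;> simp [hv]
  have key' : ∀ v, ∫ ω, (if X ω < v then (1 : ℝ) else 0) ∂P = P.real {ω | X ω < v} := by
    intro v
    rw [← integral_indicator_one (measurableSet_lt hX measurable_const)]
    rfl
  rwa [key, key, key', key'] at hφ

end PositiveRegressionDependence

section TwoSidedTest

variable {F₀ : ℝ → ℝ} {α c₁ c₂ : ℝ}

theorem neg_eq_and_pos_of_symmetric (hF₀ : StrictMono F₀) (hsym : ∀ x, F₀ (-x) = 1 - F₀ x)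
    (hα : α < 1) (hc₁ : F₀ c₁ = α / 2) (hc₂ : F₀ c₂ = 1 - α / 2) : c₁ = -c₂ ∧ 0 < c₂ := by
  have h0 : F₀ 0 = 1 / 2 := by linarith [neg_zero (G := ℝ) ▸ hsym 0]
  refine ⟨hF₀.injective ?_, hF₀.lt_iff_lt.1 ?_⟩
  · rw [hsym, hc₁, hc₂]; ring
  · rw [h0, hc₂]; linarith

theorem le_or_le_of_pValue_le (hF₀ : StrictMono F₀) (hc₁ : F₀ c₁ = α / 2)
    (hc₂ : F₀ c₂ = 1 - α / 2) {t : ℝ} (h : 2 * min (F₀ t) (1 - F₀ t) ≤ α) :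
    t ≤ c₁ ∨ c₂ ≤ t := by
  rcases min_le_iff.1 (show min (F₀ t) (1 - F₀ t) ≤ α / 2 by linarith) with h | h
  · exact Or.inl (hF₀.le_iff_le.1 (by linarith))
  · exact Or.inr (hF₀.le_iff_le.1 (by linarith))

theorem sign_mul_le_of_mul_neg {θ t c : ℝ} (hc : 0 < c) (ht : t ≤ -c ∨ c ≤ t) (h : θ * t < 0) :
    Real.sign θ * t ≤ -c := by
  rcases lt_trichotomy θ 0 with hθ | rfl | hθ
  · rw [Real.sign_of_neg hθ]; rcases ht with ht | ht <;> nlinarith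
  · simp at h
  · rw [Real.sign_of_pos hθ]; rcases ht with ht | ht <;> nlinarith

theorem le_sign_mul_of_mul_nonneg {θ t c : ℝ} (hc : 0 < c) (ht : t ≤ -c ∨ c ≤ t) (hθ : θ ≠ 0)
    (h : 0 ≤ θ * t) : c ≤ Real.sign θ * t := by
  rcases hθ.lt_or_gt with hθ | hθ
  · rw [Real.sign_of_neg hθ]; rcases ht with ht | ht <;> nlinarith
  · rw [Real.sign_of_pos hθ]; rcases ht with ht | ht <;> nlinarith

/-- The odds `P₀(T < c₁) / P₀(T < c₂)` of the lower rejection region under the null. -/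
noncomputable def tailOdds (α : ℝ) : ℝ := α / 2 / (1 - α / 2)

theorem tailOdds_mul (hα : α < 1) : tailOdds α * (1 - α / 2) = α / 2 :=
  div_mul_cancel₀ _ (by linarith)

theorem tailOdds_nonneg (hα : α ∈ Ioo 0 1) : 0 ≤ tailOdds α :=
  div_nonneg (by linarith [hα.1]) (by linarith [hα.2])

theorem tailOdds_le_one (hα : α < 1) : tailOdds α ≤ 1 :=
  (div_le_one (by linarith)).2 (by linarith)

theorem le_tailOdds_mul (hα : α < 1) {a b : ℝ} (h : a * (1 - α / 2) ≤ α / 2 * b) :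
    a ≤ tailOdds α * b := by
  refine le_of_mul_le_mul_right ?_ (by linarith : 0 < 1 - α / 2)
  rwa [mul_right_comm, tailOdds_mul hα]

theorem tailOdds_add_mul (hα : α < 1) : tailOdds α + (1 - tailOdds α) * (α / 2) = α := by
  linear_combination tailOdds_mul hα

theorem pos_and_le_one_of_symmetric (hF₀ : StrictMono F₀) (hsym : ∀ x, F₀ (-x) = 1 - F₀ x)
    (hnonneg : ∀ x, 0 ≤ F₀ x) (x : ℝ) : 0 < F₀ x ∧ F₀ x ≤ 1 :=
  ⟨(hnonneg (x - 1)).trans_lt (hF₀ (by linarith)), by linarith [hsym x, hnonneg (-x)]⟩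

end TwoSidedTest

section FixedSequenceEvents

variable {Ω : Type*} {n : ℕ} {θ : Fin n → ℝ} {T : Fin n → Ω → ℝ} {c₂ : ℝ}

def passed (θ : Fin n → ℝ) (T : Fin n → Ω → ℝ) (c₂ : ℝ) (k : ℕ) : Set Ω :=
  {ω | ∀ j : Fin n, (j : ℕ) < k → c₂ ≤ Real.sign (θ j) * T j ω}

def atIndex (A : Fin n → Set Ω) (k : ℕ) : Set Ω := ⋃ (j : Fin n) (_ : (j : ℕ) = k), A j

theorem atIndex_val (A : Fin n → Set Ω) (j : Fin n) : atIndex A j = A j := by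
  ext ω
  simp [atIndex, Fin.val_inj]

theorem atIndex_of_le (A : Fin n → Set Ω) {k : ℕ} (hk : n ≤ k) : atIndex A k = ∅ := by
  ext ω
  simp only [atIndex, mem_iUnion, mem_empty_iff_false, iff_false]
  rintro ⟨j, rfl, -⟩
  exact absurd j.isLt (not_lt.2 hk)

theorem passed_zero : passed θ T c₂ 0 = univ := by
  ext ω
  simp [passed]

theorem passed_succ (j : Fin n) :
    passed θ T c₂ (j + 1) = passed θ T c₂ j ∩ {ω | c₂ ≤ Real.sign (θ j) * T j ω} := by
  ext ω
  refine ⟨fun h => ⟨fun l hl => h l (hl.trans j.val.lt_succ_self), h j j.val.lt_succ_self⟩,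
    fun ⟨h, hj⟩ l hl => ?_⟩
  rcases (Nat.lt_succ_iff.1 hl).lt_or_eq with hl | hl
  · exact h l hl
  · exact Fin.ext hl ▸ hj

theorem Fin.exists_first_index (p : Fin n → Prop) :
    ∃ m ≤ n, (∀ j : Fin n, (j : ℕ) < m → ¬p j) ∧ ∀ j : Fin n, (j : ℕ) = m → p j := by
  by_cases h : ∃ j, p j
  · obtain ⟨j, hj, hmin⟩ := wellFounded_lt.has_min {j | p j} h
    exact ⟨j, j.isLt.le, fun l hl hl' => hmin l hl' hl, fun l hl => Fin.ext hl ▸ hj⟩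
  · exact ⟨n, le_rfl, fun j _ hj => h ⟨j, hj⟩, fun j hj => absurd hj j.isLt.ne⟩

theorem setOf_directionalError_subset {c₁ : ℝ} {rej : Fin n → Set Ω}
    (hrej : ∀ j ω, ω ∈ rej j → T j ω ≤ c₁ ∨ c₂ ≤ T j ω) (hc : c₁ = -c₂) (hc₂0 : 0 < c₂)
    {m : ℕ} (hfalse : ∀ j : Fin n, (j : ℕ) < m → θ j ≠ 0)
    (hnull : ∀ j : Fin n, (j : ℕ) = m → θ j = 0) :
    {ω | ∃ i, (∀ j ≤ i, ω ∈ rej j) ∧ (θ i = 0 ∨ θ i ≠ 0 ∧ θ i * T i ω < 0)} ⊆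
      (⋃ k ∈ Finset.range m,
        passed θ T c₂ k ∩ atIndex (fun j => {ω | Real.sign (θ j) * T j ω ≤ c₁}) k) ∪
        passed θ T c₂ m ∩ atIndex (fun j => {ω | T j ω ≤ c₁ ∨ c₂ ≤ T j ω}) m := by
  subst hc
  rintro ω ⟨i, hrej_i, herr⟩
  -- `j` is the first index whose claim is not a correctly signed rejection of a false null.
  obtain ⟨j, ⟨hji, hj⟩, hmin⟩ :=
    wellFounded_lt.has_min {j | j ≤ i ∧ ¬(θ j ≠ 0 ∧ 0 ≤ θ j * T j ω)}
      ⟨i, le_rfl, fun ⟨hθ, h⟩ => herr.elim hθ fun h' => h'.2.not_ge h⟩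
  have hbefore : ∀ l < j, θ l ≠ 0 ∧ 0 ≤ θ l * T l ω := fun l hl => by
    by_contra h
    exact hmin l ⟨hl.le.trans hji, h⟩ hl
  have hpass : ω ∈ passed θ T c₂ j := fun l hl =>
    le_sign_mul_of_mul_nonneg hc₂0 (hrej l ω (hrej_i l (hl.le.trans hji))) (hbefore l hl).1
      (hbefore l hl).2
  have hjm : (j : ℕ) ≤ m := by
    by_contra! h
    exact (hbefore ⟨m, h.trans j.isLt⟩ h).1 (hnull _ rfl)
  rcases hjm.lt_or_eq with hlt | heq
  · refine Or.inl (mem_iUnion₂.2 ⟨j, Finset.mem_range.2 hlt, hpass, ?_⟩)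
    rw [atIndex_val]
    simp only [not_and, not_le] at hj
    exact sign_mul_le_of_mul_neg hc₂0 (hrej j ω (hrej_i j hji)) (hj (hfalse j hlt))
  · refine Or.inr ⟨heq ▸ hpass, ?_⟩
    rw [← heq, atIndex_val]
    exact hrej j ω (hrej_i j hji)

end FixedSequenceEvents

section DirectionalFixedSequence

variable {Ω : Type*} [MeasurableSpace Ω] {Pr : Measure Ω} [IsProbabilityMeasure Pr] {n : ℕ}
  {θ : Fin n → ℝ} {T : Fin n → Ω → ℝ} {α c₁ c₂ : ℝ}

theorem measureReal_sign_mul_lt_le_tailOdds_mul {f : ℝ → ℝ → ℝ} (hf0 : ∀ s x, 0 ≤ f s x)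
    (hfm : ∀ s, Measurable (f s))
    (hMLR : ∀ s s' : ℝ, s < s' → ∀ x₁ x₂ : ℝ, x₁ < x₂ → f s' x₁ * f s x₂ ≤ f s' x₂ * f s x₁)
    {F₀ : ℝ → ℝ} (hcdf₀ : ∀ x, F₀ x = ∫ t in Iic x, f 0 t) (hF₀ : ∀ x, 0 < F₀ x ∧ F₀ x ≤ 1)
    (hα : α < 1) (hc₁ : F₀ c₁ = α / 2) (hc₂ : F₀ c₂ = 1 - α / 2) (hc : c₁ = -c₂) (hc₂0 : 0 < c₂)
    {X : Ω → ℝ} (hX : Measurable X) {s : ℝ} (hs : s ≠ 0)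
    (hlaw : Pr.map X = volume.withDensity fun x => ENNReal.ofReal (f s x)) :
    Pr.real {ω | Real.sign s * X ω < c₁} ≤ tailOdds α * Pr.real {ω | Real.sign s * X ω < c₂} := by
  set ν₀ := volume.withDensity fun x => ENNReal.ofReal (f 0 x)
  have hν₀ : ∀ x, ν₀.real (Iic x) = F₀ x := fun x =>
    (withDensity_ofReal_real_Iic (hf0 0) (hcdf₀ x ▸ (hF₀ x).1.ne')).trans (hcdf₀ x).symm
  have hν₀univ : ν₀ univ ≤ 1 := withDensity_ofReal_univ_le_one (hf0 0)
    (fun x => hcdf₀ x ▸ (hF₀ x).2) (Eventually.of_forall fun x => hcdf₀ x ▸ (hF₀ x).1.ne')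
  have : IsFiniteMeasure ν₀ := ⟨hν₀univ.trans_lt ENNReal.one_lt_top⟩
  have : IsProbabilityMeasure (Pr.map X) := Measure.isProbabilityMeasure_map hX.aemeasurable
  have hc₁₂ : c₁ ≤ c₂ := by linarith
  refine le_tailOdds_mul hα ?_
  rcases hs.lt_or_gt with hneg | hpos
  · have hset : ∀ c, {ω | Real.sign s * X ω < c} = X ⁻¹' Ioi (-c) := fun c => by
      ext ω; simp [Real.sign_of_neg hneg, neg_lt]
    rw [hset, hset, hc, neg_neg, ← hc, ← map_measureReal_apply hX measurableSet_Ioi,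
      ← map_measureReal_apply hX measurableSet_Ioi]
    exact measureReal_Ioi_mul_le_of_likelihoodRatio (hf0 0) (hf0 s) (hfm 0) (hfm s) rfl hlaw
      (hMLR s 0 hneg) hc₁₂ ((hν₀ c₁).trans hc₁) ((hν₀ c₂).trans hc₂)
      (ENNReal.toReal_le_of_le_ofReal zero_le_one (ENNReal.ofReal_one ▸ hν₀univ))
  · have hatom := measure_eq_zero_of_map_eq_withDensity hX hlaw
    have hset : ∀ c, Pr.real {ω | Real.sign s * X ω < c} = (Pr.map X).real (Iic c) := fun c => by
      rw [map_measureReal_apply hX measurableSet_Iic, Real.sign_of_pos hpos]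
      simp only [one_mul]
      exact measureReal_lt_eq_measureReal_le (hatom c)
    rw [hset, hset]
    exact measureReal_Iic_mul_le_of_likelihoodRatio (hf0 0) (hf0 s) (hfm 0) (hfm s) rfl hlaw
      (hMLR 0 s hpos) hc₁₂ ((hν₀ c₁).trans hc₁) ((hν₀ c₂).trans hc₂)

theorem measurableSet_passed (hT : ∀ i, Measurable (T i)) (k : ℕ) :
    MeasurableSet (passed θ T c₂ k) := by
  simp only [passed, ofPred_forall]
  exact .iInter fun j => .iInter fun _ => measurableSet_le measurable_const ((hT j).const_mul _)

theorem measureReal_passed_inter_sign_mul_le (hT : ∀ i, Measurable (T i))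
    (hPRD : LowerTailPRD Pr fun (i : {i // θ i ≠ 0}) ω => Real.sign (θ i.1) * T i.1 ω)
    (hα : α ∈ Ioo 0 1) (hc : c₁ ≤ c₂) (j : Fin n) (hfalse : ∀ l ≤ j, θ l ≠ 0)
    (hratio : Pr.real {ω | Real.sign (θ j) * T j ω < c₁} ≤
      tailOdds α * Pr.real {ω | Real.sign (θ j) * T j ω < c₂})
    (hatom : ∀ x, Pr {ω | T j ω = x} = 0) :
    Pr.real (passed θ T c₂ j ∩ {ω | Real.sign (θ j) * T j ω ≤ c₁}) ≤
      tailOdds α * (Pr.real (passed θ T c₂ j) - Pr.real (passed θ T c₂ (j + 1))) := by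
  set U : Set ({i // θ i ≠ 0} → ℝ) := {y | ∀ l, (l.1 : ℕ) < j → c₂ ≤ y l}
  have hU : IsUpperSet U := fun y y' hyy' hy l hl => (hy l hl).trans (hyy' l)
  have hUm : MeasurableSet U := by
    simp only [U, ofPred_forall]
    exact .iInter fun l => .iInter fun _ =>
      measurableSet_le measurable_const (measurable_pi_apply l)
  have hG :
      {ω | (fun i : {i // θ i ≠ 0} => Real.sign (θ i.1) * T i.1 ω) ∈ U} = passed θ T c₂ j := by
    ext ω
    exact ⟨fun h l hl => h ⟨l, hfalse l hl.le⟩ hl, fun h l hl => h l.1 hl⟩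
  have hcross :=
    hPRD.measureReal_cross (fun i => (hT i.1).const_mul _) ⟨j, hfalse j le_rfl⟩ hU hUm hc
  rw [hG] at hcross
  have hsplit : Pr.real (passed θ T c₂ j) - Pr.real (passed θ T c₂ (j + 1)) =
      Pr.real ({ω | Real.sign (θ j) * T j ω < c₂} ∩ passed θ T c₂ j) := by
    rw [passed_succ, ← measureReal_inter_add_sdiff (s := passed θ T c₂ j)
      (t := {ω | c₂ ≤ Real.sign (θ j) * T j ω})
      (measurableSet_le measurable_const ((hT j).const_mul _)), add_sub_cancel_left]
    congr 1
    ext ω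
    simp [and_comm]
  rw [hsplit]
  have hnull := measure_mul_eq_zero hatom (mt Real.sign_eq_zero_iff.1 (hfalse j le_rfl)) c₁
  exact (measureReal_inter_le_le_of_null hnull _).trans
    (measureReal_inter_le_of_cross (tailOdds_nonneg hα) hcross hratio)

theorem measureReal_biUnion_passed_inter_le (hT : ∀ i, Measurable (T i))
    (hPRD : LowerTailPRD Pr fun (i : {i // θ i ≠ 0}) ω => Real.sign (θ i.1) * T i.1 ω)
    (hα : α ∈ Ioo 0 1) (hc : c₁ ≤ c₂) {m : ℕ} (hm : m ≤ n)
    (hfalse : ∀ j : Fin n, (j : ℕ) < m → θ j ≠ 0)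
    (hratio : ∀ j, θ j ≠ 0 → Pr.real {ω | Real.sign (θ j) * T j ω < c₁} ≤
      tailOdds α * Pr.real {ω | Real.sign (θ j) * T j ω < c₂})
    (hatom : ∀ j x, Pr {ω | T j ω = x} = 0) :
    Pr.real (⋃ k ∈ Finset.range m,
        passed θ T c₂ k ∩ atIndex (fun j => {ω | Real.sign (θ j) * T j ω ≤ c₁}) k) ≤
      tailOdds α * (1 - Pr.real (passed θ T c₂ m)) := by
  have := measureReal_biUnion_range_le_of_telescoping (μ := Pr) (G := passed θ T c₂)
    (E := atIndex fun j => {ω | Real.sign (θ j) * T j ω ≤ c₁}) (κ := tailOdds α) (K := m)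
    fun k hk => ?_
  · rwa [passed_zero, probReal_univ] at this
  set j : Fin n := ⟨k, hk.trans_le hm⟩
  have := measureReal_passed_inter_sign_mul_le hT hPRD hα hc j
    (fun l hl => hfalse l (Fin.le_def.1 hl |>.trans_lt hk))
    (hratio j (hfalse j hk)) (hatom j)
  rwa [← atIndex_val (fun j => {ω | Real.sign (θ j) * T j ω ≤ c₁})] at this

theorem measureReal_passed_le_of_neg (hT : ∀ i, Measurable (T i)) (i₀ : Fin n) {l : Fin n}
    (hl : l < i₀) (hθl : θ l < 0) (hc : c₁ = -c₂)
    (hMMLR : HasMLRCondDensities Pr (fun ω (m : Fin l) => T (Fin.castLE l.isLt.le m) ω) (T l)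
      (T i₀)) :
    Pr.real (passed θ T c₂ i₀) ≤ Pr.real {ω | T i₀ ω ≤ c₁} := by
  refine (measureReal_mono fun ω hω => ?_).trans
    (ENNReal.toReal_mono (measure_ne_top _ _) (hMMLR.measure_le_le (by fun_prop) c₁))
  have := hω l hl
  rw [Real.sign_of_neg hθl] at this
  show T l ω ≤ c₁
  linarith

theorem measureReal_lt_inter_passed_le (hT : ∀ i, Measurable (T i)) (i₀ : Fin n)
    (hpos : ∀ l < i₀, 0 < θ l) {g : Ω → Fin 0 → ℝ}
    (h5 : CondLowerTailPRD Pr (MeasurableSpace.comap g inferInstance)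
      (fun ω (l : Fin i₀) => T (Fin.castLE i₀.isLt.le l) ω) (T i₀))
    (hα : α ∈ Ioo 0 1) (hc : c₁ ≤ c₂) (h₁ : Pr.real {ω | T i₀ ω < c₁} = α / 2)
    (h₂ : Pr.real {ω | T i₀ ω < c₂} = 1 - α / 2) :
    Pr.real ({ω | T i₀ ω < c₁} ∩ passed θ T c₂ i₀) ≤
      tailOdds α * Pr.real ({ω | T i₀ ω < c₂} ∩ passed θ T c₂ i₀) := by
  rw [MeasurableSpace.comap_eq_bot_of_subsingleton] at h5
  set V : Set (Fin i₀ → ℝ) := {x | ∀ l, c₂ ≤ x l}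
  have hV : IsUpperSet V := fun x y hxy hx l => (hx l).trans (hxy l)
  have hVm : MeasurableSet V := by
    simp only [V, ofPred_forall]
    exact .iInter fun l => measurableSet_le measurable_const (measurable_pi_apply l)
  have hG : (fun ω (l : Fin i₀) => T (Fin.castLE i₀.isLt.le l) ω) ⁻¹' V = passed θ T c₂ i₀ := by
    ext ω
    refine ⟨fun h j hj => ?_, fun h l => ?_⟩
    · rw [Real.sign_of_pos (hpos j hj), one_mul]
      exact h ⟨j, hj⟩
    · have := h (Fin.castLE i₀.isLt.le l) l.isLt
      rwa [Real.sign_of_pos (hpos _ l.isLt), one_mul] at this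
  have hcross := h5.measureReal_cross (by fun_prop) (hT i₀) hV hVm hc
  rw [hG] at hcross
  exact measureReal_inter_le_of_cross (tailOdds_nonneg hα) hcross
    (by rw [h₁, h₂, tailOdds_mul hα.2])

theorem measureReal_passed_inter_reject_le (hT : ∀ i, Measurable (T i)) (i₀ : Fin n)
    (hfalse : ∀ l < i₀, θ l ≠ 0)
    (hMMLR : ∀ l < i₀, HasMLRCondDensities Pr
      (fun ω (m : Fin l) => T (Fin.castLE l.isLt.le m) ω) (T l) (T i₀))
    {g : Ω → Fin 0 → ℝ} (h5 : CondLowerTailPRD Pr (MeasurableSpace.comap g inferInstance)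
      (fun ω (l : Fin i₀) => T (Fin.castLE i₀.isLt.le l) ω) (T i₀))
    {F₀ : ℝ → ℝ} (hcdf : ∀ x, Pr.real {ω | T i₀ ω ≤ x} = F₀ x)
    (hatom : ∀ x, Pr {ω | T i₀ ω = x} = 0) (hα : α ∈ Ioo 0 1) (hc₁ : F₀ c₁ = α / 2)
    (hc₂ : F₀ c₂ = 1 - α / 2) (hc : c₁ = -c₂) (hc₂0 : 0 < c₂) :
    Pr.real (passed θ T c₂ i₀ ∩ {ω | T i₀ ω ≤ c₁ ∨ c₂ ≤ T i₀ ω}) ≤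
      tailOdds α * Pr.real (passed θ T c₂ i₀) + (1 - tailOdds α) * (α / 2) := by
  set G := passed θ T c₂ i₀
  have hle₁ : Pr.real {ω | T i₀ ω ≤ c₁} = α / 2 := (hcdf c₁).trans hc₁
  have hlt₂ : Pr.real {ω | T i₀ ω < c₂} = 1 - α / 2 :=
    (measureReal_lt_eq_measureReal_le (hatom c₂)).trans ((hcdf c₂).trans hc₂)
  have hmeas₂ : MeasurableSet {ω | T i₀ ω < c₂} := measurableSet_lt (hT i₀) measurable_const
  have hupper : Pr.real (G ∩ {ω | c₂ ≤ T i₀ ω}) ≤ α / 2 := by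
    refine (measureReal_mono inter_subset_right).trans_eq ?_
    have : {ω | c₂ ≤ T i₀ ω} = {ω | T i₀ ω < c₂}ᶜ := by ext; simp
    rw [this, measureReal_compl hmeas₂, probReal_univ, hlt₂]
    ring
  have hsplit := measureReal_inter_le_or_le_le (c₂ := c₂) (hatom c₁) G
  have hdecomp : Pr.real ({ω | T i₀ ω < c₂} ∩ G) + Pr.real (G ∩ {ω | c₂ ≤ T i₀ ω}) =
      Pr.real G := by
    rw [inter_comm, ← measureReal_inter_add_sdiff (s := G) hmeas₂]
    congr 2
    ext ω
    simp
  have hκ1 := sub_nonneg.2 (tailOdds_le_one hα.2)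
  by_cases hneg : ∃ l < i₀, θ l < 0
  · obtain ⟨l, hl, hθl⟩ := hneg
    have hG : Pr.real G ≤ α / 2 :=
      (measureReal_passed_le_of_neg hT i₀ hl hθl hc (hMMLR l hl)).trans_eq hle₁
    nlinarith [measureReal_mono (μ := Pr) (inter_subset_left (s := G)
      (t := {ω | T i₀ ω ≤ c₁ ∨ c₂ ≤ T i₀ ω})), mul_nonneg hκ1 (sub_nonneg.2 hG)]
  · simp only [not_exists, not_and, not_lt] at hneg
    have hlower := measureReal_lt_inter_passed_le hT i₀
      (fun l hl => (hneg l hl).lt_of_ne (hfalse l hl).symm) h5 hα (by linarith)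
      ((measureReal_lt_eq_measureReal_le (hatom c₁)).trans hle₁) hlt₂
    nlinarith [mul_nonneg hκ1 (sub_nonneg.2 hupper)]

end DirectionalFixedSequence

theorem procedure2_controls_mdFWER_MMLR_general
    {Ω : Type*} [MeasurableSpace Ω] (Pr : Measure Ω) [IsProbabilityMeasure Pr]
    (F : ℝ → ℝ → ℝ)
    (hF0strict : StrictMono (F 0))
    (hFsym : ∀ x : ℝ, F 0 (-x) = 1 - F 0 x)
    -- MLR assumption (Assumption 2)
    (f : ℝ → ℝ → ℝ)
    (hf_nonneg : ∀ θ' x, 0 ≤ f θ' x)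
    (hf_meas : ∀ θ', Measurable (f θ'))
    (hf_cdf : ∀ θ' x, F θ' x = ∫ t in Set.Iic x, f θ' t)
    (hMLR : ∀ θ' θ'' : ℝ, θ' < θ'' → ∀ x₁ x₂ : ℝ, x₁ < x₂ →
      f θ'' x₁ * f θ' x₂ ≤ f θ'' x₂ * f θ' x₁)
    (n : ℕ) (θ : Fin n → ℝ)
    (T : Fin n → Ω → ℝ) (hT : ∀ i, Measurable (T i))
    (hcdf : ∀ i x, (Pr {ω | T i ω ≤ x}).toReal = F (θ i) x)
    -- Assumption 3: positive regression dependence of the signed false-null statistics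
    (hPRD : ∀ k : {i : Fin n // θ i ≠ 0},
      ∀ φ : ({i : Fin n // θ i ≠ 0} → ℝ) → ℝ,
      Measurable φ → Monotone φ → (∃ C, ∀ x, |φ x| ≤ C) →
      ∀ u u' : ℝ, u ≤ u' →
        (Pr {ω | u ≤ Real.sign (θ k.1) * T k.1 ω} ≠ 0 →
         Pr {ω | u' ≤ Real.sign (θ k.1) * T k.1 ω} ≠ 0 →
          (∫ ω in {ω | u ≤ Real.sign (θ k.1) * T k.1 ω},
              φ (fun i => Real.sign (θ i.1) * T i.1 ω) ∂Pr)
              / (Pr {ω | u ≤ Real.sign (θ k.1) * T k.1 ω}).toReal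
            ≤ (∫ ω in {ω | u' ≤ Real.sign (θ k.1) * T k.1 ω},
              φ (fun i => Real.sign (θ i.1) * T i.1 ω) ∂Pr)
              / (Pr {ω | u' ≤ Real.sign (θ k.1) * T k.1 ω}).toReal) ∧
        (Pr {ω | Real.sign (θ k.1) * T k.1 ω < u} ≠ 0 →
         Pr {ω | Real.sign (θ k.1) * T k.1 ω < u'} ≠ 0 →
          (∫ ω in {ω | Real.sign (θ k.1) * T k.1 ω < u},
              φ (fun i => Real.sign (θ i.1) * T i.1 ω) ∂Pr)
              / (Pr {ω | Real.sign (θ k.1) * T k.1 ω < u}).toReal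
            ≤ (∫ ω in {ω | Real.sign (θ k.1) * T k.1 ω < u'},
              φ (fun i => Real.sign (θ i.1) * T i.1 ω) ∂Pr)
              / (Pr {ω | Real.sign (θ k.1) * T k.1 ω < u'}).toReal))
    -- Assumption 5: conditional positive regression dependence of the false-null
    -- statistics and the first true-null statistic
    (h5 : ∀ i₀ : Fin n, θ i₀ = 0 → (∀ l, l < i₀ → θ l ≠ 0) →
      ∀ (j : ℕ) (hj : j ≤ (i₀ : ℕ)),
      ∀ φ : (Fin (i₀ : ℕ) → ℝ) → ℝ,
        Measurable φ → Monotone φ → (∀ x, 0 ≤ φ x) → (∃ C, ∀ x, φ x ≤ C) →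
      ∀ u u' : ℝ, u ≤ u' →
        (∀ᵐ ω ∂Pr,
          (Pr[fun ω' => φ (fun l => T (Fin.castLE i₀.isLt.le l) ω') *
                (if u ≤ T i₀ ω' then 1 else 0)
            | MeasurableSpace.comap
                (fun ω'' (l : Fin j) => T (Fin.castLE (hj.trans i₀.isLt.le) l) ω'')
                inferInstance]) ω *
          (Pr[fun ω' => (if u' ≤ T i₀ ω' then (1 : ℝ) else 0)
            | MeasurableSpace.comap
                (fun ω'' (l : Fin j) => T (Fin.castLE (hj.trans i₀.isLt.le) l) ω'')
                inferInstance]) ω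
          ≤
          (Pr[fun ω' => φ (fun l => T (Fin.castLE i₀.isLt.le l) ω') *
                (if u' ≤ T i₀ ω' then 1 else 0)
            | MeasurableSpace.comap
                (fun ω'' (l : Fin j) => T (Fin.castLE (hj.trans i₀.isLt.le) l) ω'')
                inferInstance]) ω *
          (Pr[fun ω' => (if u ≤ T i₀ ω' then (1 : ℝ) else 0)
            | MeasurableSpace.comap
                (fun ω'' (l : Fin j) => T (Fin.castLE (hj.trans i₀.isLt.le) l) ω'')
                inferInstance]) ω) ∧
        (∀ᵐ ω ∂Pr,
          (Pr[fun ω' => φ (fun l => T (Fin.castLE i₀.isLt.le l) ω') *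
                (if T i₀ ω' < u then 1 else 0)
            | MeasurableSpace.comap
                (fun ω'' (l : Fin j) => T (Fin.castLE (hj.trans i₀.isLt.le) l) ω'')
                inferInstance]) ω *
          (Pr[fun ω' => (if T i₀ ω' < u' then (1 : ℝ) else 0)
            | MeasurableSpace.comap
                (fun ω'' (l : Fin j) => T (Fin.castLE (hj.trans i₀.isLt.le) l) ω'')
                inferInstance]) ω
          ≤
          (Pr[fun ω' => φ (fun l => T (Fin.castLE i₀.isLt.le l) ω') *
                (if T i₀ ω' < u' then 1 else 0)
            | MeasurableSpace.comap
                (fun ω'' (l : Fin j) => T (Fin.castLE (hj.trans i₀.isLt.le) l) ω'')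
                inferInstance]) ω *
          (Pr[fun ω' => (if T i₀ ω' < u then (1 : ℝ) else 0)
            | MeasurableSpace.comap
                (fun ω'' (l : Fin j) => T (Fin.castLE (hj.trans i₀.isLt.le) l) ω'')
                inferInstance]) ω))
    -- Assumption 7 (MMLR): conditional densities of T_j and T_{i₀} given the
    -- preceding statistics are in monotone likelihood ratio order
    (hMMLR : ∀ i₀ : Fin n, θ i₀ = 0 → (∀ l, l < i₀ → θ l ≠ 0) →
      ∀ j : Fin n, j < i₀ →
      ∃ fj gj : (Fin (j : ℕ) → ℝ) → ℝ → ℝ,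
        Measurable (fun p : (Fin (j : ℕ) → ℝ) × ℝ => fj p.1 p.2) ∧
        Measurable (fun p : (Fin (j : ℕ) → ℝ) × ℝ => gj p.1 p.2) ∧
        (∀ t x, 0 ≤ fj t x) ∧ (∀ t x, 0 ≤ gj t x) ∧
        (∀ A : Set (Fin (j : ℕ) → ℝ), MeasurableSet A →
         ∀ B : Set ℝ, MeasurableSet B →
          (Pr {ω | (fun l : Fin (j : ℕ) => T (Fin.castLE j.isLt.le l) ω) ∈ A ∧
              T j ω ∈ B}).toReal
            = ∫ t in A, (∫ x in B, fj t x)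
                ∂(Pr.map (fun ω (l : Fin (j : ℕ)) => T (Fin.castLE j.isLt.le l) ω))) ∧
        (∀ A : Set (Fin (j : ℕ) → ℝ), MeasurableSet A →
         ∀ B : Set ℝ, MeasurableSet B →
          (Pr {ω | (fun l : Fin (j : ℕ) => T (Fin.castLE j.isLt.le l) ω) ∈ A ∧
              T i₀ ω ∈ B}).toReal
            = ∫ t in A, (∫ x in B, gj t x)
                ∂(Pr.map (fun ω (l : Fin (j : ℕ)) => T (Fin.castLE j.isLt.le l) ω))) ∧
        (∀ᵐ t ∂(Pr.map (fun ω (l : Fin (j : ℕ)) => T (Fin.castLE j.isLt.le l) ω)),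
          ∀ x₁ x₂ : ℝ, x₁ < x₂ → fj t x₁ * gj t x₂ ≤ fj t x₂ * gj t x₁))
    (α : ℝ) (hα : α ∈ Set.Ioo (0 : ℝ) 1)
    (c₁ c₂ : ℝ) (hc₁ : F 0 c₁ = α / 2) (hc₂ : F 0 c₂ = 1 - α / 2) :
    (Pr {ω | ∃ i : Fin n,
        (∀ j : Fin n, j ≤ i →
          2 * min (F 0 (T j ω)) (1 - F 0 (T j ω)) ≤ α) ∧
        (θ i = 0 ∨ (θ i ≠ 0 ∧ θ i * T i ω < 0))}).toReal ≤ α := by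
  obtain ⟨hc, hc₂0⟩ := neg_eq_and_pos_of_symmetric hF0strict hFsym hα.2 hc₁ hc₂
  have hF0 := pos_and_le_one_of_symmetric hF0strict hFsym fun x =>
    (hf_cdf 0 x).symm ▸ setIntegral_nonneg measurableSet_Iic fun t _ => hf_nonneg 0 t
  have hlaw : ∀ i, Pr.map (T i) = volume.withDensity fun x => ENNReal.ofReal (f (θ i) x) :=
    fun i => map_eq_withDensity_of_cdf (hT i) (hf_nonneg _) fun x => (hcdf i x).trans (hf_cdf _ x)
  have hatom : ∀ i x, Pr {ω | T i ω = x} = 0 := fun i =>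
    measure_eq_zero_of_map_eq_withDensity (hT i) (hlaw i)
  have hratio := fun j (hj : θ j ≠ 0) => measureReal_sign_mul_lt_le_tailOdds_mul hf_nonneg
    hf_meas hMLR (hf_cdf 0) hF0 hα.2 hc₁ hc₂ hc hc₂0 (hT j) hj (hlaw j)
  obtain ⟨m, hmn, hfalse, hnull⟩ := Fin.exists_first_index (θ · = 0)
  have hlast : Pr.real (passed θ T c₂ m ∩ atIndex (fun j => {ω | T j ω ≤ c₁ ∨ c₂ ≤ T j ω}) m) ≤
      tailOdds α * Pr.real (passed θ T c₂ m) + (1 - tailOdds α) * (α / 2) := by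
    rcases hmn.lt_or_eq with hm | rfl
    · have := measureReal_passed_inter_reject_le hT ⟨m, hm⟩ (fun l hl => hfalse l hl)
        (hMMLR _ (hnull _ rfl) fun l hl => hfalse l hl)
        (fun φ hφ hmono h0 hC u u' hu => (h5 _ (hnull _ rfl) (fun l hl => hfalse l hl) 0
          (Nat.zero_le _) φ hφ hmono h0 hC u u' hu).2)
        (fun x => (hcdf _ x).trans (by rw [hnull _ rfl])) (hatom _) hα hc₁ hc₂ hc hc₂0
      rwa [← atIndex_val (fun j => {ω | T j ω ≤ c₁ ∨ c₂ ≤ T j ω})] at this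
    · rw [atIndex_of_le _ le_rfl, inter_empty, measureReal_empty]
      exact add_nonneg (mul_nonneg (tailOdds_nonneg hα) measureReal_nonneg)
        (mul_nonneg (sub_nonneg.2 (tailOdds_le_one hα.2)) (by linarith [hα.1]))
  calc Pr.real _
      ≤ Pr.real (_ ∪ _) := measureReal_mono (setOf_directionalError_subset
          (rej := fun j => {ω | 2 * min (F 0 (T j ω)) (1 - F 0 (T j ω)) ≤ α})
          (fun _ _ h => le_or_le_of_pValue_le hF0strict hc₁ hc₂ h) hc hc₂0 hfalse hnull)
    _ ≤ _ := measureReal_union_le _ _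
    _ ≤ tailOdds α * (1 - Pr.real (passed θ T c₂ m)) +
          (tailOdds α * Pr.real (passed θ T c₂ m) + (1 - tailOdds α) * (α / 2)) :=
        add_le_add (measureReal_biUnion_passed_inter_le hT
          (fun k φ hφ hmono hC u u' hu => (hPRD k φ hφ hmono hC u u' hu).2) hα (by linarith) hmn
          hfalse hratio hatom) hlast
    _ = α := by linear_combination tailOdds_add_mul hα.2

/-- Theorem 4: Under MLR (Assumption 2), positive regression dependence
of the signed false-null statistics (Assumption 3), the conditional positive regression
dependence Assumption 5, and the multivariate monotone likelihood ratio condition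
(Assumption 7, MMLR), Procedure 2 (constant critical value α) satisfies mdFWER ≤ α
for every n and every configuration of parameters. -/
theorem procedure2_controls_mdFWER_MMLR
    {Ω : Type*} [MeasurableSpace Ω] (Pr : Measure Ω) [IsProbabilityMeasure Pr]
    (F : ℝ → ℝ → ℝ)
    (hFcont : ∀ θ', Continuous (F θ'))
    (hFmono : ∀ θ', Monotone (F θ'))
    (hF0strict : StrictMono (F 0))
    (hFsym : ∀ x : ℝ, F 0 (-x) = 1 - F 0 x)
    (hstoch : ∀ θ' θ'' : ℝ, θ' ≤ θ'' → ∀ x, F θ'' x ≤ F θ' x)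
    -- MLR assumption (Assumption 2)
    (f : ℝ → ℝ → ℝ)
    (hf_nonneg : ∀ θ' x, 0 ≤ f θ' x)
    (hf_meas : ∀ θ', Measurable (f θ'))
    (hf_cdf : ∀ θ' x, F θ' x = ∫ t in Set.Iic x, f θ' t)
    (hMLR : ∀ θ' θ'' : ℝ, θ' < θ'' → ∀ x₁ x₂ : ℝ, x₁ < x₂ →
      f θ'' x₁ * f θ' x₂ ≤ f θ'' x₂ * f θ' x₁)
    (n : ℕ) (θ : Fin n → ℝ)
    (T : Fin n → Ω → ℝ) (hT : ∀ i, Measurable (T i))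
    (hcdf : ∀ i x, (Pr {ω | T i ω ≤ x}).toReal = F (θ i) x)
    -- Assumption 3: positive regression dependence of the signed false-null statistics
    (hPRD : ∀ k : {i : Fin n // θ i ≠ 0},
      ∀ φ : ({i : Fin n // θ i ≠ 0} → ℝ) → ℝ,
      Measurable φ → Monotone φ → (∃ C, ∀ x, |φ x| ≤ C) →
      ∀ u u' : ℝ, u ≤ u' →
        (Pr {ω | u ≤ Real.sign (θ k.1) * T k.1 ω} ≠ 0 →
         Pr {ω | u' ≤ Real.sign (θ k.1) * T k.1 ω} ≠ 0 →
          (∫ ω in {ω | u ≤ Real.sign (θ k.1) * T k.1 ω},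
              φ (fun i => Real.sign (θ i.1) * T i.1 ω) ∂Pr)
              / (Pr {ω | u ≤ Real.sign (θ k.1) * T k.1 ω}).toReal
            ≤ (∫ ω in {ω | u' ≤ Real.sign (θ k.1) * T k.1 ω},
              φ (fun i => Real.sign (θ i.1) * T i.1 ω) ∂Pr)
              / (Pr {ω | u' ≤ Real.sign (θ k.1) * T k.1 ω}).toReal) ∧
        (Pr {ω | Real.sign (θ k.1) * T k.1 ω < u} ≠ 0 →
         Pr {ω | Real.sign (θ k.1) * T k.1 ω < u'} ≠ 0 →
          (∫ ω in {ω | Real.sign (θ k.1) * T k.1 ω < u},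
              φ (fun i => Real.sign (θ i.1) * T i.1 ω) ∂Pr)
              / (Pr {ω | Real.sign (θ k.1) * T k.1 ω < u}).toReal
            ≤ (∫ ω in {ω | Real.sign (θ k.1) * T k.1 ω < u'},
              φ (fun i => Real.sign (θ i.1) * T i.1 ω) ∂Pr)
              / (Pr {ω | Real.sign (θ k.1) * T k.1 ω < u'}).toReal))
    -- Assumption 5: conditional positive regression dependence of the false-null
    -- statistics and the first true-null statistic
    (h5 : ∀ i₀ : Fin n, θ i₀ = 0 → (∀ l, l < i₀ → θ l ≠ 0) →
      ∀ (j : ℕ) (hj : j ≤ (i₀ : ℕ)),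
      ∀ φ : (Fin (i₀ : ℕ) → ℝ) → ℝ,
        Measurable φ → Monotone φ → (∀ x, 0 ≤ φ x) → (∃ C, ∀ x, φ x ≤ C) →
      ∀ u u' : ℝ, u ≤ u' →
        (∀ᵐ ω ∂Pr,
          (Pr[fun ω' => φ (fun l => T (Fin.castLE i₀.isLt.le l) ω') *
                (if u ≤ T i₀ ω' then 1 else 0)
            | MeasurableSpace.comap
                (fun ω'' (l : Fin j) => T (Fin.castLE (hj.trans i₀.isLt.le) l) ω'')
                inferInstance]) ω *
          (Pr[fun ω' => (if u' ≤ T i₀ ω' then (1 : ℝ) else 0)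
            | MeasurableSpace.comap
                (fun ω'' (l : Fin j) => T (Fin.castLE (hj.trans i₀.isLt.le) l) ω'')
                inferInstance]) ω
          ≤
          (Pr[fun ω' => φ (fun l => T (Fin.castLE i₀.isLt.le l) ω') *
                (if u' ≤ T i₀ ω' then 1 else 0)
            | MeasurableSpace.comap
                (fun ω'' (l : Fin j) => T (Fin.castLE (hj.trans i₀.isLt.le) l) ω'')
                inferInstance]) ω *
          (Pr[fun ω' => (if u ≤ T i₀ ω' then (1 : ℝ) else 0)
            | MeasurableSpace.comap
                (fun ω'' (l : Fin j) => T (Fin.castLE (hj.trans i₀.isLt.le) l) ω'')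
                inferInstance]) ω) ∧
        (∀ᵐ ω ∂Pr,
          (Pr[fun ω' => φ (fun l => T (Fin.castLE i₀.isLt.le l) ω') *
                (if T i₀ ω' < u then 1 else 0)
            | MeasurableSpace.comap
                (fun ω'' (l : Fin j) => T (Fin.castLE (hj.trans i₀.isLt.le) l) ω'')
                inferInstance]) ω *
          (Pr[fun ω' => (if T i₀ ω' < u' then (1 : ℝ) else 0)
            | MeasurableSpace.comap
                (fun ω'' (l : Fin j) => T (Fin.castLE (hj.trans i₀.isLt.le) l) ω'')
                inferInstance]) ω
          ≤
          (Pr[fun ω' => φ (fun l => T (Fin.castLE i₀.isLt.le l) ω') *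
                (if T i₀ ω' < u' then 1 else 0)
            | MeasurableSpace.comap
                (fun ω'' (l : Fin j) => T (Fin.castLE (hj.trans i₀.isLt.le) l) ω'')
                inferInstance]) ω *
          (Pr[fun ω' => (if T i₀ ω' < u then (1 : ℝ) else 0)
            | MeasurableSpace.comap
                (fun ω'' (l : Fin j) => T (Fin.castLE (hj.trans i₀.isLt.le) l) ω'')
                inferInstance]) ω))
    -- Assumption 7 (MMLR): conditional densities of T_j and T_{i₀} given the
    -- preceding statistics are in monotone likelihood ratio order
    (hMMLR : ∀ i₀ : Fin n, θ i₀ = 0 → (∀ l, l < i₀ → θ l ≠ 0) →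
      ∀ j : Fin n, j < i₀ →
      ∃ fj gj : (Fin (j : ℕ) → ℝ) → ℝ → ℝ,
        Measurable (fun p : (Fin (j : ℕ) → ℝ) × ℝ => fj p.1 p.2) ∧
        Measurable (fun p : (Fin (j : ℕ) → ℝ) × ℝ => gj p.1 p.2) ∧
        (∀ t x, 0 ≤ fj t x) ∧ (∀ t x, 0 ≤ gj t x) ∧
        (∀ A : Set (Fin (j : ℕ) → ℝ), MeasurableSet A →
         ∀ B : Set ℝ, MeasurableSet B →
          (Pr {ω | (fun l : Fin (j : ℕ) => T (Fin.castLE j.isLt.le l) ω) ∈ A ∧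
              T j ω ∈ B}).toReal
            = ∫ t in A, (∫ x in B, fj t x)
                ∂(Pr.map (fun ω (l : Fin (j : ℕ)) => T (Fin.castLE j.isLt.le l) ω))) ∧
        (∀ A : Set (Fin (j : ℕ) → ℝ), MeasurableSet A →
         ∀ B : Set ℝ, MeasurableSet B →
          (Pr {ω | (fun l : Fin (j : ℕ) => T (Fin.castLE j.isLt.le l) ω) ∈ A ∧
              T i₀ ω ∈ B}).toReal
            = ∫ t in A, (∫ x in B, gj t x)
                ∂(Pr.map (fun ω (l : Fin (j : ℕ)) => T (Fin.castLE j.isLt.le l) ω))) ∧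
        (∀ᵐ t ∂(Pr.map (fun ω (l : Fin (j : ℕ)) => T (Fin.castLE j.isLt.le l) ω)),
          ∀ x₁ x₂ : ℝ, x₁ < x₂ → fj t x₁ * gj t x₂ ≤ fj t x₂ * gj t x₁))
    (α : ℝ) (hα : α ∈ Set.Ioo (0 : ℝ) 1)
    (c₁ c₂ : ℝ) (hc₁ : F 0 c₁ = α / 2) (hc₂ : F 0 c₂ = 1 - α / 2) :
    (Pr {ω | ∃ i : Fin n,
        (∀ j : Fin n, j ≤ i →
          2 * min (F 0 (T j ω)) (1 - F 0 (T j ω)) ≤ α) ∧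
        (θ i = 0 ∨ (θ i ≠ 0 ∧ θ i * T i ω < 0))}).toReal ≤ α :=
  procedure2_controls_mdFWER_MMLR_general Pr F hF0strict hFsym f hf_nonneg hf_meas hf_cdf hMLR n θ T
    hT hcdf hPRD h5 hMMLR α hα c₁ c₂ hc₁ hc₂
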